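/- (Determinism modulo attributes) In the instrumented big-step semantics of CBPV with strictness attributes, if ρ1 ≡ ρ2 (environments equal up to attribute annotations), then: (1) if γ1·ρ1 ⊢ V ⇓ W1 and γ2·ρ2 ⊢ V ⇓ W2 then W1 ≡ W2; (2) if γ1·ρ1 ⊢ M ⇓ T1 and γ2·ρ2 ⊢ M ⇓ T2 then T1 ≡ T2, where ≡ is the congruence on closed terminal values/computations that ignores all attribute vectors stored in closures and thunks. -/

import Mathlib

/-! # CBPV with strictness attributes (CBPV^γ) -/

/-- Strictness attributes: S (strict), Q (unknown, written `?`), L (lazy). -/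
inductive Attr : Type
  | S | Q | L
deriving DecidableEq

/-- Addition of strictness attributes (Table 1). -/
def Attr.add : Attr → Attr → Attr
  | .S, _ => .S
  | _, .S => .S
  | .Q, _ => .Q
  | _, .Q => .Q
  | .L, .L => .L

/-- The information order on attributes: `? ≤ L`, `? ≤ S`, and reflexivity. -/
def Attr.le (a b : Attr) : Prop := a = b ∨ a = .Q

abbrev Var := String

/-- Attribute vectors: partial maps from variables to attributes.
`none` means the variable is not in the vector's domain
(absent variables are treated as lazy). -/
abbrev Vec := Var → Option Attr

/-- Addition lifted to optional attributes. -/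
def OAttr.add : Option Attr → Option Attr → Option Attr
  | none, b => b
  | a, none => a
  | some a, some b => some (a.add b)

/-- Pointwise addition of attribute vectors. -/
def Vec.add (g1 g2 : Vec) : Vec := fun x => OAttr.add (g1 x) (g2 x)

/-- The all-lazy (empty) vector `L̄`. -/
def Vec.lazy : Vec := fun _ => none

/-- The vector mapping exactly `x` to `a`. -/
def Vec.single (x : Var) (a : Attr) : Vec := fun y => if y = x then some a else none

/-- Remove `x` from a vector (the operation `⇂x`). -/
def Vec.drop (g : Vec) (x : Var) : Vec := fun y => if y = x then none else g y

/-- Update a vector at `x`. -/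
def Vec.upd (g : Vec) (x : Var) (a : Attr) : Vec := fun y => if y = x then some a else g y

/-- Restrict `g` to the domain of `d` (the operation `g |_{dom d}`). -/
def Vec.restrictDom (g d : Vec) : Vec := fun x => if (d x).isSome then g x else none

/-- Attribute stored in a vector, with absence read as lazy. -/
def getA : Option Attr → Attr
  | none => .L
  | some a => a

/-- Pointwise information order on vectors. -/
def Vec.le (g1 g2 : Vec) : Prop := ∀ x, (getA (g1 x)).le (getA (g2 x))

/-! ## Types -/

mutual
/-- Value types. -/
inductive VTy : Type
  | unit : VTy
  | U : Vec → CTy → VTy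
  | prod : VTy → VTy → VTy
  | sum : VTy → VTy → VTy
/-- Computation types. -/
inductive CTy : Type
  | arr : VTy → Attr → CTy → CTy
  | F : VTy → CTy
end

mutual
/-- Remove a variable from all vectors in a value type. -/
def VTy.drop : VTy → Var → VTy
  | .unit, _ => .unit
  | .U γ B, x => .U (γ.drop x) (B.drop x)
  | .prod A1 A2, x => .prod (A1.drop x) (A2.drop x)
  | .sum A1 A2, x => .sum (A1.drop x) (A2.drop x)
/-- Remove a variable from all vectors in a computation type. -/
def CTy.drop : CTy → Var → CTy
  | .arr A α B, x => .arr (A.drop x) α (B.drop x)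
  | .F A, x => .F (A.drop x)
end

/-! ## Syntax -/

mutual
/-- Values. -/
inductive Val : Type
  | unit : Val
  | var : Var → Val
  | thunk : Comp → Val
  | inl : Val → Val
  | inr : Val → Val
  | pair : Val → Val → Val
/-- Computations. -/
inductive Comp : Type
  | lam : Var → Comp → Comp
  | app : Comp → Val → Comp
  | force : Val → Comp
  | letin : Var → Comp → Comp → Comp
  | split : Var → Var → Val → Comp → Comp
  | sub : Comp → Comp
  | ret : Val → Comp
  | seq : Val → Comp → Comp
  | case : Val → Var → Comp → Var → Comp → Comp
end

/-! ## Closed terminals and environments -/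

/-- Closed terminal values. -/
inductive W : Type
  | unit : W
  | pair : W → W → W
  | inl : W → W
  | inr : W → W
  | thunk : Vec → (Var → Option W) → Comp → W

/-- Closed terminal computations. -/
inductive T : Type
  | ret : W → T
  | clos : Vec → (Var → Option W) → Var → Comp → T

/-- Environments (possibly missing bindings). -/
abbrev Env := Var → Option W

def Env.upd (ρ : Env) (x : Var) (w : W) : Env := fun y => if y = x then some w else ρ y

/-- Remove the binding of `x` from `ρ`. -/
def Env.remove (ρ : Env) (x : Var) : Env := fun y => if y = x then none else ρ y

/-! ## Typing contexts -/

abbrev Ctx := Var → Option VTy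

def Ctx.ext (Γ : Ctx) (x : Var) (A : VTy) : Ctx := fun y => if y = x then some A else Γ y

/-! ## Typing (Figure 6) -/

mutual
/-- Value typing `γ·Γ ⊢ V : A`. -/
inductive VHasTy : Vec → Ctx → Val → VTy → Prop
  | var {Γ : Ctx} {x A} : Γ x = some A →
      VHasTy (Vec.single x .S) Γ (.var x) A
  | unit {Γ} : VHasTy Vec.lazy Γ .unit .unit
  | thunk {γ Γ M B} : CHasTy γ Γ M B →
      VHasTy Vec.lazy Γ (.thunk M) (.U γ B)
  | pair {γ1 γ2 Γ V1 V2 A1 A2} :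
      VHasTy γ1 Γ V1 A1 → VHasTy γ2 Γ V2 A2 →
      VHasTy (γ1.add γ2) Γ (.pair V1 V2) (.prod A1 A2)
  | inl {γ Γ V A1 A2} : VHasTy γ Γ V A1 →
      VHasTy γ Γ (.inl V) (.sum A1 A2)
  | inr {γ Γ V A1 A2} : VHasTy γ Γ V A2 →
      VHasTy γ Γ (.inr V) (.sum A1 A2)
/-- Computation typing `γ·Γ ⊢ M : B`. -/
inductive CHasTy : Vec → Ctx → Comp → CTy → Prop
  | ret {γ Γ V A} : VHasTy γ Γ V A →
      CHasTy γ Γ (.ret V) (.F A)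
  | sub {γ γ' Γ M B} : CHasTy γ' Γ M B → Vec.le γ γ' →
      CHasTy γ Γ (.sub M) B
  | force {γ1 γ2 Γ V B} : VHasTy γ1 Γ V (.U γ2 B) →
      CHasTy (γ1.add γ2) Γ (.force V) B
  | letin {γ1 γ2 Γ x M1 M2 A B} :
      CHasTy γ1 Γ M1 (.F A) →
      CHasTy γ2 (Γ.ext x A) M2 B →
      CHasTy (γ1.add (γ2.drop x)) Γ (.letin x M1 M2) (B.drop x)
  | seq {γ1 γ2 Γ V M B} :
      VHasTy γ1 Γ V .unit → CHasTy γ2 Γ M B →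
      CHasTy (γ1.add γ2) Γ (.seq V M) B
  | lam {γ Γ x M A B} :
      CHasTy γ (Γ.ext x A) M B →
      CHasTy (γ.drop x) Γ (.lam x M) (.arr A (getA (γ x)) (B.drop x))
  | app {γ1 γ2 Γ M V A α B} :
      CHasTy γ1 Γ M (.arr A α B) → VHasTy γ2 Γ V A →
      CHasTy (γ1.add γ2) Γ (.app M V) B
  | split {γ1 γ2 Γ x1 x2 V M A1 A2 B} :
      VHasTy γ1 Γ V (.prod A1 A2) →
      CHasTy γ2 ((Γ.ext x1 A1).ext x2 A2) M B →
      CHasTy (γ1.add ((γ2.drop x1).drop x2)) Γ (.split x1 x2 V M) ((B.drop x1).drop x2)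
  | case {γ1 g1 g2 Γ V x1 M1 x2 M2 A1 A2 B1 B2} :
      VHasTy γ1 Γ V (.sum A1 A2) →
      CHasTy g1 (Γ.ext x1 A1) M1 B1 →
      CHasTy g2 (Γ.ext x2 A2) M2 B2 →
      g1.drop x1 = g2.drop x2 →
      B1.drop x1 = B2.drop x2 →
      CHasTy (γ1.add (g1.drop x1)) Γ (.case V x1 M1 x2 M2) (B1.drop x1)
end

/-! ## Instrumented big-step semantics (Figure 7) -/

mutual
/-- Value evaluation `γ·ρ ⊢ V ⇓ W`. -/
inductive EvalV : Vec → Env → Val → W → Prop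
  | var {ρ : Env} {x w} : ρ x = some w →
      EvalV (Vec.single x .S) ρ (.var x) w
  | unit {ρ} : EvalV Vec.lazy ρ .unit .unit
  | thunk {ρ M} (γ : Vec) : EvalV Vec.lazy ρ (.thunk M) (.thunk γ ρ M)
  | pair {γ1 γ2 ρ V1 V2 w1 w2} :
      EvalV γ1 ρ V1 w1 → EvalV γ2 ρ V2 w2 →
      EvalV (γ1.add γ2) ρ (.pair V1 V2) (.pair w1 w2)
  | inl {γ ρ V w} : EvalV γ ρ V w → EvalV γ ρ (.inl V) (.inl w)
  | inr {γ ρ V w} : EvalV γ ρ V w → EvalV γ ρ (.inr V) (.inr w)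
/-- Computation evaluation `γ·ρ ⊢ M ⇓ T`. -/
inductive EvalC : Vec → Env → Comp → T → Prop
  | sub {γ γ' ρ M t} : EvalC γ' ρ M t → Vec.le γ γ' →
      EvalC γ ρ (.sub M) t
  | ret {γ ρ V w} : EvalV γ ρ V w → EvalC γ ρ (.ret V) (.ret w)
  | letin {γ1 γ2 ρ x M1 M2 w t} :
      EvalC γ1 ρ M1 (.ret w) →
      EvalC γ2 (Env.upd ρ x w) M2 t →
      EvalC (γ1.add (γ2.drop x)) ρ (.letin x M1 M2) t
  | force {γ1 γ2 ρ ρ' V M t} :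
      EvalV γ1 ρ V (.thunk γ2 ρ' M) →
      EvalC γ2 ρ' M t →
      EvalC (γ1.add (Vec.restrictDom γ2 γ1)) ρ (.force V) t
  | seq {γ1 γ2 ρ V M t} :
      EvalV γ1 ρ V .unit → EvalC γ2 ρ M t →
      EvalC (γ1.add γ2) ρ (.seq V M) t
  | lam {γ ρ x M} : EvalC γ ρ (.lam x M) (.clos γ ρ x M)
  | app {γ1 γ2 γ3 ρ ρ' x M V M' w t} (α : Attr) :
      EvalC γ1 ρ M (.clos γ3 ρ' x M') →
      EvalV γ2 ρ V w →
      EvalC (γ3.upd x α) (Env.upd ρ' x w) M' t →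
      EvalC (γ1.add γ2) ρ (.app M V) t
  | split {γ1 γ2 ρ x1 x2 V M w1 w2 t} :
      EvalV γ1 ρ V (.pair w1 w2) →
      EvalC γ2 (Env.upd (Env.upd ρ x1 w1) x2 w2) M t →
      EvalC (γ1.add ((γ2.drop x1).drop x2)) ρ (.split x1 x2 V M) t
  | caseL {γ1 γ2 ρ V x1 M1 x2 M2 w t} :
      EvalV γ1 ρ V (.inl w) →
      EvalC γ2 (Env.upd ρ x1 w) M1 t →
      EvalC (γ1.add (γ2.drop x1)) ρ (.case V x1 M1 x2 M2) t
  | caseR {γ1 γ2 ρ V x1 M1 x2 M2 w t} :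
      EvalV γ1 ρ V (.inr w) →
      EvalC γ2 (Env.upd ρ x2 w) M2 t →
      EvalC (γ1.add (γ2.drop x2)) ρ (.case V x1 M1 x2 M2) t
end

theorem core_smoke : True := trivial

/-! ## Equivalence modulo attribute vectors (Figure 11) -/

mutual
/-- Equivalence of closed terminal values, ignoring attribute vectors. -/
inductive WEquiv : W → W → Prop
  | unit : WEquiv .unit .unit
  | pair {w1 w1' w2 w2'} : WEquiv w1 w1' → WEquiv w2 w2' →
      WEquiv (.pair w1 w2) (.pair w1' w2')
  | inl {w w'} : WEquiv w w' → WEquiv (.inl w) (.inl w')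
  | inr {w w'} : WEquiv w w' → WEquiv (.inr w) (.inr w')
  | thunk {γ γ' : Vec} {ρ ρ' : Var → Option W} {M} :
      (∀ x, OWEquiv (ρ x) (ρ' x)) →
      WEquiv (.thunk γ ρ M) (.thunk γ' ρ' M)
/-- Equivalence of optional bindings, ignoring attribute vectors. -/
inductive OWEquiv : Option W → Option W → Prop
  | none : OWEquiv none none
  | some {w w'} : WEquiv w w' → OWEquiv (some w) (some w')
/-- Equivalence of closed terminal computations, ignoring attribute vectors. -/
inductive TEquiv : T → T → Prop
  | ret {w w'} : WEquiv w w' → TEquiv (.ret w) (.ret w')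
  | clos {γ γ' : Vec} {ρ ρ' : Var → Option W} {x M} :
      (∀ y, OWEquiv (ρ y) (ρ' y)) →
      TEquiv (.clos γ ρ x M) (.clos γ' ρ' x M)
end

/-- Pointwise equivalence of environments modulo attribute vectors. -/
def EnvEquiv (ρ ρ' : Env) : Prop := ∀ x, OWEquiv (ρ x) (ρ' x)

/-!
Induction on the first derivation, inverting the second one against the same syntax. The only
nondeterminism of the semantics (the vector chosen in `E-Thunk`, the vector in `E-Sub`, the
attribute given to an argument in `E-App`) is confined to attribute vectors, so corresponding
premises of the two derivations run the same subterm in environments that stay equivalent: the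
environments are extended by equivalent results, or are those of equivalent closures.
-/

theorem EnvEquiv.upd {ρ ρ' : Env} {x : Var} {w w' : W} (h : EnvEquiv ρ ρ') (hw : WEquiv w w') :
    EnvEquiv (ρ.upd x w) (ρ'.upd x w') := by
  intro y
  by_cases hy : y = x
  · simpa [Env.upd, hy] using OWEquiv.some hw
  · simpa [Env.upd, hy] using h y

mutual

theorem EvalV.wEquiv_of_envEquiv {γ1 : Vec} {ρ1 : Env} {V : Val} {w1 : W}
    (h1 : EvalV γ1 ρ1 V w1) {γ2 : Vec} {ρ2 : Env} {w2 : W} (he : EnvEquiv ρ1 ρ2)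
    (h2 : EvalV γ2 ρ2 V w2) : WEquiv w1 w2 :=
  match h1, h2 with
  | @EvalV.var _ x _ hx1, .var hx2 => by
    have hx := he x
    rw [hx1, hx2] at hx
    cases hx with
    | some hw => exact hw
  | .unit, .unit => .unit
  | .thunk _, .thunk _ => .thunk he
  | .pair ha1 hb1, .pair ha2 hb2 =>
    .pair (ha1.wEquiv_of_envEquiv he ha2) (hb1.wEquiv_of_envEquiv he hb2)
  | .inl h1, .inl h2 => .inl (h1.wEquiv_of_envEquiv he h2)
  | .inr h1, .inr h2 => .inr (h1.wEquiv_of_envEquiv he h2)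
termination_by structural h1

theorem EvalC.tEquiv_of_envEquiv {γ1 : Vec} {ρ1 : Env} {M : Comp} {t1 : T}
    (h1 : EvalC γ1 ρ1 M t1) {γ2 : Vec} {ρ2 : Env} {t2 : T} (he : EnvEquiv ρ1 ρ2)
    (h2 : EvalC γ2 ρ2 M t2) : TEquiv t1 t2 :=
  match h1, h2 with
  | .sub h1 _, .sub h2 _ => h1.tEquiv_of_envEquiv he h2
  | .ret h1, .ret h2 => .ret (h1.wEquiv_of_envEquiv he h2)
  | .letin hM1 hN1, .letin hM2 hN2 =>
    match hM1.tEquiv_of_envEquiv he hM2 with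
    | .ret hw => hN1.tEquiv_of_envEquiv (he.upd hw) hN2
  | .force hV1 hM1, .force hV2 hM2 =>
    match hV1.wEquiv_of_envEquiv he hV2 with
    | .thunk he' => hM1.tEquiv_of_envEquiv he' hM2
  | .seq _ hM1, .seq _ hM2 => hM1.tEquiv_of_envEquiv he hM2
  | .lam, .lam => .clos he
  | .app _ hM1 hV1 hB1, .app _ hM2 hV2 hB2 =>
    match hM1.tEquiv_of_envEquiv he hM2 with
    | .clos he' =>
      hB1.tEquiv_of_envEquiv (EnvEquiv.upd he' (hV1.wEquiv_of_envEquiv he hV2)) hB2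
  | .split hV1 hM1, .split hV2 hM2 =>
    match hV1.wEquiv_of_envEquiv he hV2 with
    | .pair hw hw' => hM1.tEquiv_of_envEquiv ((he.upd hw).upd hw') hM2
  | .caseL hV1 hM1, .caseL hV2 hM2 =>
    match hV1.wEquiv_of_envEquiv he hV2 with
    | .inl hw => hM1.tEquiv_of_envEquiv (he.upd hw) hM2
  | .caseR hV1 hM1, .caseR hV2 hM2 =>
    match hV1.wEquiv_of_envEquiv he hV2 with
    | .inr hw => hM1.tEquiv_of_envEquiv (he.upd hw) hM2
  | .caseL hV1 _, .caseR hV2 _ => nomatch hV1.wEquiv_of_envEquiv he hV2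
  | .caseR hV1 _, .caseL hV2 _ => nomatch hV1.wEquiv_of_envEquiv he hV2
termination_by structural h1

end

/-- Determinism of the instrumented semantics modulo attributes. -/
theorem determinism_mod_attrs {ρ1 ρ2 : Env} (h : EnvEquiv ρ1 ρ2) :
    (∀ {γ1 γ2 : Vec} {V : Val} {w1 w2 : W},
      EvalV γ1 ρ1 V w1 → EvalV γ2 ρ2 V w2 → WEquiv w1 w2) ∧
    (∀ {γ1 γ2 : Vec} {M : Comp} {t1 t2 : T},
      EvalC γ1 ρ1 M t1 → EvalC γ2 ρ2 M t2 → TEquiv t1 t2) :=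
  ⟨fun h1 h2 => h1.wEquiv_of_envEquiv h h2, fun h1 h2 => h1.tEquiv_of_envEquiv h h2⟩
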